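/- arXiv:1407.0664 — 3 statements merged into one kernel-verified Lean document; each statement's English description precedes it below -/
import Mathlib

section
/- Let H be a complex Hilbert space and M a von Neumann algebra on H of type II₁ with a faithful normal tracial state ρ. Then M has Property Γ̂ (the net/weak-operator-topology version) if and only if M has Property Γ with respect to ρ (the ε–2-norm version). -/
set_option maxHeartbeats 1000000
set_option synthInstance.maxHeartbeats 400000

open scoped ComplexOrder
open Filter Topology

noncomputable section

namespace Paper

variable {H : Type*} [NormedAddCommGroup H] [InnerProductSpace ℂ H] [CompleteSpace H]

/-- Convergence in the weak operator topology along a filter. -/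
def WOTConv {E : Type*} [NormedAddCommGroup E] [InnerProductSpace ℂ E] {ι : Type*}
    (l : Filter ι) (T : ι → E →L[ℂ] E) (S : E →L[ℂ] E) : Prop :=
  ∀ x y : E, Tendsto (fun t => (inner ℂ (T t x) y : ℂ)) l (𝓝 (inner ℂ (S x) y))

/-- `p` is a (self-adjoint idempotent) projection. -/
def IsProjection (p : H →L[ℂ] H) : Prop := star p = p ∧ p * p = p

/-- Two projections are (Murray-von Neumann) equivalent in `S`. -/
def EquivProj (S : Set (H →L[ℂ] H)) (p q : H →L[ℂ] H) : Prop :=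
  ∃ v ∈ S, star v * v = p ∧ v * star v = q

/-- `ρ` is a faithful normal tracial state on (the von Neumann algebra whose underlying
set is) `S`. -/
structure IsFNTState (S : Set (H →L[ℂ] H)) (ρ : (H →L[ℂ] H) →ₗ[ℂ] ℂ) : Prop where
  map_one : ρ 1 = 1
  nonneg : ∀ a ∈ S, 0 ≤ ρ (star a * a)
  tracial : ∀ a ∈ S, ∀ b ∈ S, ρ (a * b) = ρ (b * a)
  faithful : ∀ a ∈ S, ρ (star a * a) = 0 → a = 0
  normal : ∀ {ι : Type} (l : Filter ι) (T : ι → H →L[ℂ] H) (T' : H →L[ℂ] H),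
    (∀ t, T t ∈ S) → (∀ t, ‖T t‖ ≤ 1) → T' ∈ S → ‖T'‖ ≤ 1 →
    WOTConv l T T' → Tendsto (fun t => ρ (T t)) l (𝓝 (ρ T'))

/-- The 2-norm `‖a‖₂ = √ρ(a*a)` associated to a state `ρ`. -/
def norm2 (ρ : (H →L[ℂ] H) →ₗ[ℂ] ℂ) (a : H →L[ℂ] H) : ℝ :=
  Real.sqrt (ρ (star a * a)).re

/-- `M` is a von Neumann algebra of type II₁: it admits a faithful normal tracial state and
contains no nonzero projection `p` with `pMp` commutative. -/
def IsTypeII1 (M : VonNeumannAlgebra H) : Prop :=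
  (∃ ρ : (H →L[ℂ] H) →ₗ[ℂ] ℂ, IsFNTState (M : Set (H →L[ℂ] H)) ρ) ∧
  ∀ p ∈ M, IsProjection p → p ≠ 0 →
    ¬ (∀ x ∈ M, ∀ y ∈ M, p * x * p * (p * y * p) = p * y * p * (p * x * p))

/-- Property Γ (the ε–2-norm version) for the von Neumann algebra with underlying set `S`,
with respect to the faithful normal tracial state `ρ`. -/
def PropertyGammaOn (S : Set (H →L[ℂ] H)) (ρ : (H →L[ℂ] H) →ₗ[ℂ] ℂ) : Prop :=
  ∀ ε : ℝ, 0 < ε → ∀ n : ℕ, 0 < n → ∀ (k : ℕ) (a : Fin k → H →L[ℂ] H), (∀ j, a j ∈ S) →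
    ∃ p : Fin n → H →L[ℂ] H,
      (∀ i, p i ∈ S ∧ IsProjection (p i)) ∧
      (∀ i j, i ≠ j → p i * p j = 0) ∧
      (∀ i j, EquivProj S (p i) (p j)) ∧
      (∑ i, p i) = 1 ∧
      ∀ i j, norm2 ρ (p i * a j - a j * p i) < ε

/-- Property Γ̂ : the net/weak-operator-topology version of Property Γ. -/
def PropertyGammaHat (M : VonNeumannAlgebra H) : Prop :=
  ∀ (k : ℕ) (a : Fin k → H →L[ℂ] H), (∀ j, a j ∈ M) → ∀ n : ℕ, 0 < n →
    ∃ (Λ : Type) (_ : Preorder Λ), Nonempty Λ ∧ IsDirected Λ (· ≤ ·) ∧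
      ∃ p : Fin n → Λ → H →L[ℂ] H,
        (∀ i lam, p i lam ∈ M ∧ IsProjection (p i lam)) ∧
        (∀ lam, ∀ i j, i ≠ j → p i lam * p j lam = 0) ∧
        (∀ lam i j, EquivProj (M : Set (H →L[ℂ] H)) (p i lam) (p j lam)) ∧
        (∀ lam, (∑ i, p i lam) = 1) ∧
        ∀ i j, WOTConv atTop
          (fun lam => star (p i lam * a j - a j * p i lam) * (p i lam * a j - a j * p i lam))
          (0 : H →L[ℂ] H)

/-- `R` is a hyperfinite type II₁ subfactor of `M`. -/
structure IsHyperfiniteII1Subfactor (M R : VonNeumannAlgebra H) : Prop where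
  subset : (R : Set (H →L[ℂ] H)) ⊆ (M : Set (H →L[ℂ] H))
  infiniteDimensional : ¬ ∃ (d : ℕ) (f : Fin d → H →L[ℂ] H),
    ∀ x ∈ R, x ∈ Submodule.span ℂ (Set.range f)
  factor : ∀ x ∈ R, (∀ y ∈ R, x * y = y * x) → ∃ c : ℂ, x = c • (1 : H →L[ℂ] H)
  hyperfinite : ∃ A : ℕ → StarSubalgebra ℂ (H →L[ℂ] H),
    Monotone A ∧
    (∀ n, (A n : Set (H →L[ℂ] H)) ⊆ (R : Set (H →L[ℂ] H))) ∧
    (∀ n, ∃ (d : ℕ) (f : Fin d → H →L[ℂ] H),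
      ∀ x ∈ A n, x ∈ Submodule.span ℂ (Set.range f)) ∧
    ∀ x ∈ R, ∀ ε : ℝ, 0 < ε → ∀ (m : ℕ) (v : Fin m → H),
      ∃ y : H →L[ℂ] H, (∃ n, y ∈ A n) ∧ ∀ i, ‖(y - x) (v i)‖ < ε

/-- Membership of all matrix entries in a set. -/
def MatMem {n : ℕ} (S : Set (H →L[ℂ] H)) (A : Matrix (Fin n) (Fin n) (H →L[ℂ] H)) : Prop :=
  ∀ i j, A i j ∈ S

/-- The identification `Θ` of an `n × n` matrix of operators on `H` with an operator on the
`ℓ²`-direct sum `H⁽ⁿ⁾` of `n` copies of `H`. -/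
def Theta (n : ℕ) (T : Matrix (Fin n) (Fin n) (H →L[ℂ] H)) :
    PiLp 2 (fun _ : Fin n => H) →L[ℂ] PiLp 2 (fun _ : Fin n => H) :=
  ((PiLp.continuousLinearEquiv 2 ℂ (fun _ : Fin n => H)).symm.toContinuousLinearMap).comp
    (ContinuousLinearMap.pi
      (fun i => ∑ j, (T i j).comp
        ((ContinuousLinearMap.proj (R := ℂ) (φ := fun _ : Fin n => H) j).comp
          (PiLp.continuousLinearEquiv 2 ℂ (fun _ : Fin n => H)).toContinuousLinearMap)))

instance piLpComplete (n : ℕ) : CompleteSpace (PiLp 2 (fun _ : Fin n => H)) :=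
  inferInstance

/-- `τ` is the center-valued trace on `M_n(M)`. -/
structure IsCenterValuedTrace (M : VonNeumannAlgebra H) (n : ℕ)
    (τ : Matrix (Fin n) (Fin n) (H →L[ℂ] H) → Matrix (Fin n) (Fin n) (H →L[ℂ] H)) :
    Prop where
  map_add : ∀ A B, MatMem (M : Set (H →L[ℂ] H)) A → MatMem (M : Set (H →L[ℂ] H)) B →
    τ (A + B) = τ A + τ B
  map_smul : ∀ (c : ℂ) A, MatMem (M : Set (H →L[ℂ] H)) A → τ (c • A) = c • τ A
  mem : ∀ A, MatMem (M : Set (H →L[ℂ] H)) A → MatMem (M : Set (H →L[ℂ] H)) (τ A)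
  central : ∀ A, MatMem (M : Set (H →L[ℂ] H)) A → ∀ B, MatMem (M : Set (H →L[ℂ] H)) B →
    τ A * B = B * τ A
  tracial : ∀ A B, MatMem (M : Set (H →L[ℂ] H)) A → MatMem (M : Set (H →L[ℂ] H)) B →
    τ (A * B) = τ (B * A)
  fix_central : ∀ Z, MatMem (M : Set (H →L[ℂ] H)) Z →
    (∀ B, MatMem (M : Set (H →L[ℂ] H)) B → Z * B = B * Z) → τ Z = Z
  positive : ∀ A, MatMem (M : Set (H →L[ℂ] H)) A → (Theta n (τ (star A * A))).IsPositive
  normal : ∀ {ι : Type} (l : Filter ι) (T : ι → Matrix (Fin n) (Fin n) (H →L[ℂ] H)) (T'),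
    (∀ t, MatMem (M : Set (H →L[ℂ] H)) (T t)) → (∀ t, ‖Theta n (T t)‖ ≤ 1) →
    MatMem (M : Set (H →L[ℂ] H)) T' → ‖Theta n T'‖ ≤ 1 →
    WOTConv l (fun t => Theta n (T t)) (Theta n T') →
    WOTConv l (fun t => Theta n (τ (T t))) (Theta n (τ T'))

/-- The quantity `γ_n(A) = (‖A‖² + n‖τ_n(A*A)‖)^{1/2}`. -/
def gammaN (n : ℕ)
    (τ : Matrix (Fin n) (Fin n) (H →L[ℂ] H) → Matrix (Fin n) (Fin n) (H →L[ℂ] H))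
    (A : Matrix (Fin n) (Fin n) (H →L[ℂ] H)) : ℝ :=
  Real.sqrt (‖Theta n A‖ ^ 2 + n * ‖Theta n (τ (star A * A))‖)

/-- The `n`-fold amplification `φ⁽ⁿ⁾` of a `k`-linear map `φ`, defined entrywise by
`(φ⁽ⁿ⁾(A₁,…,A_k))_{ij} = Σ_{j₁,…,j_{k−1}} φ((A₁)_{i j₁}, (A₂)_{j₁ j₂}, …, (A_k)_{j_{k−1} j})`. -/
def ampl {k n : ℕ} (φ : (Fin k → (H →L[ℂ] H)) → (H →L[ℂ] H))
    (A : Fin k → Matrix (Fin n) (Fin n) (H →L[ℂ] H)) : Matrix (Fin n) (Fin n) (H →L[ℂ] H) :=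
  fun i j => ∑ f : Fin (k + 1) → Fin n,
    if f 0 = i ∧ f (Fin.last k) = j then φ (fun l => A l (f l.castSucc) (f l.succ)) else 0

/-- `φ` is `R`-multimodular (on tuples from `Mset`). -/
def Multimodular {k : ℕ} (Rset Mset : Set (H →L[ℂ] H))
    (φ : (Fin (k + 1) → H →L[ℂ] H) → H →L[ℂ] H) : Prop :=
  ∀ s ∈ Rset, ∀ a : Fin (k + 1) → H →L[ℂ] H, (∀ i, a i ∈ Mset) →
    s * φ a = φ (Function.update a 0 (s * a 0)) ∧
    φ a * s = φ (Function.update a (Fin.last k) (a (Fin.last k) * s)) ∧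
    ∀ i : Fin k, φ (Function.update a i.castSucc (a i.castSucc * s))
      = φ (Function.update a i.succ (s * a i.succ))

/-- `φ` is separately normal: fixing all variables but one, bounded weak-operator
convergent nets are sent to weak-operator convergent nets. -/
def SepNormal {k : ℕ} (Mset : Set (H →L[ℂ] H))
    (φ : (Fin k → H →L[ℂ] H) → H →L[ℂ] H) : Prop :=
  ∀ (i : Fin k) (a : Fin k → H →L[ℂ] H), (∀ j, a j ∈ Mset) →
    ∀ {ι : Type} (l : Filter ι) (b : ι → H →L[ℂ] H) (b' : H →L[ℂ] H) (C : ℝ),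
      (∀ t, b t ∈ Mset) → (∀ t, ‖b t‖ ≤ C) → b' ∈ Mset →
      WOTConv l b b' →
      WOTConv l (fun t => φ (Function.update a i (b t))) (φ (Function.update a i b'))

/-- The map `φ_{σ,p}`: the variables in `σ` are replaced by commutators with `p`. -/
def phiSigma {k : ℕ} (φ : (Fin k → H →L[ℂ] H) → H →L[ℂ] H) (p : H →L[ℂ] H)
    (σ : Finset (Fin k)) (a : Fin k → H →L[ℂ] H) : H →L[ℂ] H :=
  φ (fun i => if i ∈ σ then p * a i - a i * p else a i)

/-- The map `φ_{σ,p,i}` (for `i ≤ l(σ)`, the least element of `σ`). -/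
def phiSigmaI {k : ℕ} (φ : (Fin k → H →L[ℂ] H) → H →L[ℂ] H) (p : H →L[ℂ] H)
    (σ : Finset (Fin k)) (hσ : σ.Nonempty) (i : Fin k) (a : Fin k → H →L[ℂ] H) :
    H →L[ℂ] H :=
  φ (fun j =>
    if j = i then
      (if i = σ.min' hσ then p * (p * a i - a i * p) else p * a i - a i * p)
    else if j ∈ σ then p * a j - a j * p else a j)

/-- The Hochschild coboundary operator `∂`. -/
def cobound {k : ℕ} (φ : (Fin k → H →L[ℂ] H) → H →L[ℂ] H)
    (a : Fin (k + 1) → H →L[ℂ] H) : H →L[ℂ] H :=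
  a 0 * φ (fun i => a i.succ)
    + (∑ i : Fin k, (-1 : ℂ) ^ ((i : ℕ) + 1) •
        φ (fun j => if (j : ℕ) < (i : ℕ) then a j.castSucc
            else if j = i then a i.castSucc * a i.succ else a j.succ))
    + (-1 : ℂ) ^ (k + 1) • (φ (fun i => a i.castSucc) * a (Fin.last k))

/-! For a net `c` of commutators `[p, a]`, which stays bounded in norm, `|c|² → 0` in the weak
operator topology iff `‖c‖₂ → 0`. One direction is normality of `ρ`. Conversely, the WOT cluster
points of the bounded net `|c|²` exist by compactness of operator balls in the weak operator
topology; each lies in `M`, is positive, and has trace `lim ρ(|c|²) = 0` by normality, so it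
vanishes by faithfulness (applied to its square root). Both properties then follow from this
equivalence: a net witnessing Γ̂ eventually witnesses Γ for any `ε`, and witnesses of Γ for
`ε = 1/(m+1)` form a sequence witnessing Γ̂. -/

lemma norm_mul_sub_mul_le {R : Type*} [SeminormedRing R] {p : R} (hp : ‖p‖ ≤ 1) (a : R) :
    ‖p * a - a * p‖ ≤ 2 * ‖a‖ :=
  calc ‖p * a - a * p‖ ≤ ‖p‖ * ‖a‖ + ‖a‖ * ‖p‖ :=
        (norm_sub_le _ _).trans (add_le_add (norm_mul_le _ _) (norm_mul_le _ _))
    _ ≤ 1 * ‖a‖ + ‖a‖ * 1 := by gcongr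
    _ = 2 * ‖a‖ := by ring

lemma IsProjection.norm_le_one {p : H →L[ℂ] H} (hp : IsProjection p) : ‖p‖ ≤ 1 :=
  IsStarProjection.norm_le p ⟨hp.2, hp.1⟩

section WOTConv

variable {E : Type*} [NormedAddCommGroup E] [InnerProductSpace ℂ E] {ι : Type*} {l : Filter ι}
  {T : ι → E →L[ℂ] E} {S : E →L[ℂ] E}

lemma WOTConv.const_smul (h : WOTConv l T S) (c : ℂ) : WOTConv l (fun t => c • T t) (c • S) :=
  fun x y => by
    simpa only [smul_apply, inner_smul_left] using (h x y).const_mul _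

lemma WOTConv.isPositive [l.NeBot] (hT : ∀ t, (T t).IsPositive) (h : WOTConv l T S) :
    S.IsPositive := by
  refine (S.isPositive_iff).2 ⟨fun x y => tendsto_nhds_unique (h x y) ?_,
    fun x => ge_of_tendsto' (h x x) fun t => (hT t).inner_nonneg_left x⟩
  have hsymm : ∀ t, inner ℂ (T t x) y = star (inner ℂ (T t y) x) := fun t =>
    ((hT t).isSymmetric x y).trans (inner_conj_symm _ _).symm
  simp only [hsymm]
  simpa [inner_conj_symm] using (h y x).star

lemma exists_wotConv_of_norm_le [CompleteSpace E] (u : Ultrafilter ι) {C : ℝ}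
    (hbd : ∀ t, ‖T t‖ ≤ C) : ∃ S : E →L[ℂ] E, ‖S‖ ≤ C ∧ WOTConv (↑u) T S := by
  have hC : 0 ≤ C := (norm_nonneg _).trans (hbd (u.nonempty_of_mem Filter.univ_mem).some)
  have hinner : ∀ t x y, ‖inner ℂ (T t x) y‖ ≤ C * ‖x‖ * ‖y‖ := fun t x y =>
    (norm_inner_le_norm _ _).trans (by gcongr; exact (T t).le_of_opNorm_le (hbd t) x)
  have hlim : ∀ x y, ∃ z, Tendsto (fun t => inner ℂ (T t x) y) u (𝓝 z) := fun x y =>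
    let ⟨z, _, hz⟩ := (isCompact_closedBall (0 : ℂ) (C * ‖x‖ * ‖y‖)).ultrafilter_le_nhds
      (u.map fun t => inner ℂ (T t x) y)
      (le_principal_iff.2 (mem_map.2 (univ_mem' fun t =>
        mem_closedBall_zero_iff.2 (hinner t x y))))
    ⟨z, hz⟩
  choose G hG using hlim
  let B : E →L⋆[ℂ] E →L[ℂ] ℂ := LinearMap.mkContinuous₂
    (LinearMap.mk₂'ₛₗ (starRingEnd ℂ) (RingHom.id ℂ) G
      (fun x x' y => tendsto_nhds_unique (hG _ _) <| by
        simpa only [map_add, inner_add_left] using (hG x y).add (hG x' y))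
      (fun c x y => tendsto_nhds_unique (hG _ _) <| by
        simpa only [map_smul, inner_smul_left, smul_eq_mul] using (hG x y).const_mul _)
      (fun x y y' => tendsto_nhds_unique (hG _ _) <| by
        simpa only [inner_add_right] using (hG x y).add (hG x y'))
      (fun c x y => tendsto_nhds_unique (hG _ _) <| by
        simpa only [inner_smul_right, RingHom.id_apply, smul_eq_mul] using (hG x y).const_mul _))
    C fun x y => le_of_tendsto (hG x y).norm (Eventually.of_forall fun t => hinner t x y)
  refine ⟨InnerProductSpace.continuousLinearMapOfBilin B,
    ContinuousLinearMap.opNorm_le_bound _ hC fun x => ?_, fun x y => ?_⟩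
  · exact ((InnerProductSpace.toDual ℂ E).symm.norm_map (B x)).trans_le
      (B.le_of_opNorm_le (LinearMap.mkContinuous₂_norm_le _ hC _) x)
  · rw [InnerProductSpace.continuousLinearMapOfBilin_apply]
    exact hG x y

end WOTConv

lemma _root_.VonNeumannAlgebra.isClosed (M : VonNeumannAlgebra H) :
    IsClosed (M : Set (H →L[ℂ] H)) := by
  rw [← M.centralizer_centralizer]
  exact Set.isClosed_centralizer _

lemma _root_.VonNeumannAlgebra.mem_of_wotConv (M : VonNeumannAlgebra H) {ι : Type*}
    {l : Filter ι} [l.NeBot] {T : ι → H →L[ℂ] H} {S : H →L[ℂ] H} (hT : ∀ t, T t ∈ M)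
    (h : WOTConv l T S) : S ∈ M := by
  rw [← SetLike.mem_coe, ← M.centralizer_centralizer]
  intro y hy
  ext x
  refine ext_inner_right ℂ fun w => tendsto_nhds_unique ?_ (h (y x) w)
  have hcomm : ∀ t, T t (y x) = y (T t x) := fun t => DFunLike.congr_fun (hy _ (hT t)) x
  have hlim := h x (ContinuousLinearMap.adjoint y w)
  simp only [ContinuousLinearMap.adjoint_inner_right] at hlim
  simp only [hcomm]
  exact hlim

lemma norm2_nonneg (ρ : (H →L[ℂ] H) →ₗ[ℂ] ℂ) (a : H →L[ℂ] H) : 0 ≤ norm2 ρ a :=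
  Real.sqrt_nonneg _

namespace IsFNTState

variable {M : VonNeumannAlgebra H} {ρ : (H →L[ℂ] H) →ₗ[ℂ] ℂ}

lemma tendsto_of_wotConv (hρ : IsFNTState (M : Set (H →L[ℂ] H)) ρ) {ι : Type}
    {l : Filter ι} {T : ι → H →L[ℂ] H} {T' : H →L[ℂ] H} {C : ℝ} (hT : ∀ t, T t ∈ M)
    (hbd : ∀ t, ‖T t‖ ≤ C) (hT' : T' ∈ M) (hbd' : ‖T'‖ ≤ C)
    (h : WOTConv l T T') : Tendsto (fun t => ρ (T t)) l (𝓝 (ρ T')) := by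
  set r : ℝ := max C 1
  have hr : 0 < r := lt_max_of_lt_right one_pos
  have hscale : ∀ A : H →L[ℂ] H, ‖A‖ ≤ C → ‖(r⁻¹ : ℂ) • A‖ ≤ 1 := fun A hA => by
    rw [norm_smul, norm_inv, Complex.norm_real, Real.norm_of_nonneg hr.le]
    exact inv_mul_le_one_of_le₀ (hA.trans (le_max_left _ _)) hr.le
  have key := hρ.normal l _ _ (fun t => M.toStarSubalgebra.smul_mem (hT t) _)
    (fun t => hscale _ (hbd t)) (M.toStarSubalgebra.smul_mem hT' _) (hscale _ hbd')
    (h.const_smul (r⁻¹ : ℂ))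
  simp only [map_smul, smul_eq_mul] at key
  simpa [hr.ne'] using key.const_mul (r : ℂ)

lemma eq_zero_of_nonneg (hρ : IsFNTState (M : Set (H →L[ℂ] H)) ρ) {S : H →L[ℂ] H}
    (hS : S ∈ M) (hS0 : 0 ≤ S) (hρS : ρ S = 0) : S = 0 := by
  have : IsClosed (M.toStarSubalgebra : Set (H →L[ℂ] H)) := M.isClosed
  have hsqrt : CFC.sqrt S ∈ M := by
    rw [CFC.sqrt_eq_real_sqrt S hS0]
    exact cfcₙ_mem (s := M.toStarSubalgebra) _ hS
  have hsq : star (CFC.sqrt S) * CFC.sqrt S = S := by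
    rw [(CFC.sqrt_nonneg S).isSelfAdjoint.star_eq, CFC.sqrt_mul_sqrt_self S hS0]
  have hsqrt0 : CFC.sqrt S = 0 := hρ.faithful _ hsqrt (by rwa [hsq])
  simpa [hsqrt0] using hsq.symm

lemma wotConv_zero_of_tendsto (hρ : IsFNTState (M : Set (H →L[ℂ] H)) ρ) {ι : Type}
    {l : Filter ι} {d : ι → H →L[ℂ] H} {C : ℝ} (hd : ∀ t, d t ∈ M) (hd0 : ∀ t, 0 ≤ d t)
    (hbd : ∀ t, ‖d t‖ ≤ C) (h : Tendsto (fun t => ρ (d t)) l (𝓝 0)) : WOTConv l d 0 := by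
  intro x y
  rw [tendsto_iff_ultrafilter]
  intro u hu
  obtain ⟨S, hSC, hS⟩ := exists_wotConv_of_norm_le u hbd
  have hSM : S ∈ M := M.mem_of_wotConv hd hS
  have hS0 : 0 ≤ S := S.nonneg_iff_isPositive.2 <|
    hS.isPositive fun t => (d t).nonneg_iff_isPositive.1 (hd0 t)
  have hρS : ρ S = 0 :=
    tendsto_nhds_unique (hρ.tendsto_of_wotConv hd hbd hSM hSC hS) (h.mono_left hu)
  simpa [hρ.eq_zero_of_nonneg hSM hS0 hρS] using hS x y

lemma ofReal_norm2_sq (hρ : IsFNTState (M : Set (H →L[ℂ] H)) ρ) {a : H →L[ℂ] H} (ha : a ∈ M) :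
    ((norm2 ρ a ^ 2 : ℝ) : ℂ) = ρ (star a * a) := by
  obtain ⟨hre, him⟩ := Complex.le_def.1 (hρ.nonneg a ha)
  rw [norm2, Real.sq_sqrt (by simpa using hre)]
  exact Complex.ext (by simp) (by simpa using him)

lemma tendsto_norm2_zero_iff (hρ : IsFNTState (M : Set (H →L[ℂ] H)) ρ) {ι : Type*}
    {l : Filter ι} {c : ι → H →L[ℂ] H} (hc : ∀ t, c t ∈ M) :
    Tendsto (fun t => norm2 ρ (c t)) l (𝓝 0) ↔
      Tendsto (fun t => ρ (star (c t) * c t)) l (𝓝 0) := by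
  simp_rw [← hρ.ofReal_norm2_sq (hc _), tendsto_zero_iff_norm_tendsto_zero (E := ℂ),
    Complex.norm_real, Real.norm_eq_abs, abs_sq]
  refine ⟨fun h => by simpa using h.pow 2, fun h => ?_⟩
  simpa [Real.sqrt_sq (norm2_nonneg ρ _)] using h.sqrt

theorem wotConv_star_mul_self_zero_iff (hρ : IsFNTState (M : Set (H →L[ℂ] H)) ρ) {ι : Type}
    {l : Filter ι} {c : ι → H →L[ℂ] H} {C : ℝ} (hc : ∀ t, c t ∈ M) (hbd : ∀ t, ‖c t‖ ≤ C) :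
    WOTConv l (fun t => star (c t) * c t) 0 ↔ Tendsto (fun t => norm2 ρ (c t)) l (𝓝 0) := by
  have hmem : ∀ t, star (c t) * c t ∈ M := fun t => mul_mem (star_mem (hc t)) (hc t)
  have hbd2 : ∀ t, ‖star (c t) * c t‖ ≤ C * C := fun t => by
    rw [CStarRing.norm_star_mul_self]
    exact mul_self_le_mul_self (norm_nonneg _) (hbd t)
  rw [hρ.tendsto_norm2_zero_iff hc]
  refine ⟨fun h => ?_, hρ.wotConv_zero_of_tendsto hmem (fun t => star_mul_self_nonneg (c t)) hbd2⟩
  have hC : ‖(0 : H →L[ℂ] H)‖ ≤ C * C := by simpa using mul_self_nonneg C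
  simpa using hρ.tendsto_of_wotConv hmem hbd2 (zero_mem M) hC h

theorem wotConv_commutator_zero_iff (hρ : IsFNTState (M : Set (H →L[ℂ] H)) ρ) {ι : Type}
    {l : Filter ι} {p : ι → H →L[ℂ] H} (hp : ∀ t, p t ∈ M ∧ IsProjection (p t))
    {a : H →L[ℂ] H} (ha : a ∈ M) :
    WOTConv l (fun t => star (p t * a - a * p t) * (p t * a - a * p t)) 0 ↔
      Tendsto (fun t => norm2 ρ (p t * a - a * p t)) l (𝓝 0) :=
  hρ.wotConv_star_mul_self_zero_iff
    (fun t => sub_mem (mul_mem (hp t).1 ha) (mul_mem ha (hp t).1))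
    fun t => norm_mul_sub_mul_le (hp t).2.norm_le_one a

end IsFNTState

theorem statement1_general
    (M : VonNeumannAlgebra H)
    (ρ : (H →L[ℂ] H) →ₗ[ℂ] ℂ) (hρ : IsFNTState (M : Set (H →L[ℂ] H)) ρ) :
    PropertyGammaHat M ↔ PropertyGammaOn (M : Set (H →L[ℂ] H)) ρ := by
  constructor
  · intro hhat ε hε n hn k a ha
    obtain ⟨Λ, _, hne, hdir, p, hp, horth, hequiv, hsum, hwot⟩ := hhat k a ha n hn
    have : (atTop : Filter Λ).NeBot := atTop_neBot_iff.2 ⟨hne, hdir⟩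
    have hsmall : ∀ᶠ lam in atTop, ∀ i j, norm2 ρ (p i lam * a j - a j * p i lam) < ε :=
      eventually_all.2 fun i => eventually_all.2 fun j =>
        ((hρ.wotConv_commutator_zero_iff (hp i) (ha j)).1 (hwot i j)).eventually (gt_mem_nhds hε)
    obtain ⟨lam, hlam⟩ := hsmall.exists
    exact ⟨fun i => p i lam, fun i => hp i lam, horth lam, hequiv lam, hsum lam, hlam⟩
  · intro hgam k a ha n hn
    choose p hp horth hequiv hsum hsmall using fun m : ℕ =>
      hgam (1 / ((m : ℝ) + 1)) Nat.one_div_pos_of_nat n hn k a ha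
    refine ⟨ℕ, inferInstance, ⟨0⟩, inferInstance, fun i m => p m i, fun i m => hp m i, horth,
      hequiv, hsum, fun i j => (hρ.wotConv_commutator_zero_iff (fun m => hp m i) (ha j)).2 ?_⟩
    exact squeeze_zero (fun _ => norm2_nonneg ρ _) (fun m => (hsmall m i j).le)
      tendsto_one_div_add_atTop_nhds_zero_nat

/-- A type II₁ von Neumann algebra `M` with a faithful normal tracial state
`ρ` has Property Γ̂ (the net/weak-operator-topology version) iff it has Property Γ with
respect to `ρ` (the ε–2-norm version). -/
theorem statement1
    (M : VonNeumannAlgebra H) (hM : IsTypeII1 M)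
    (ρ : (H →L[ℂ] H) →ₗ[ℂ] ℂ) (hρ : IsFNTState (M : Set (H →L[ℂ] H)) ρ) :
    PropertyGammaHat M ↔ PropertyGammaOn (M : Set (H →L[ℂ] H)) ρ :=
  statement1_general M ρ hρ

end Paper
end
end

section
/- Let H be a complex Hilbert space, M a von Neumann algebra on H, p ∈ M a projection, and k ≥ 2 an integer. Let φ : M^k → B(H) be a k-linear map satisfying p φ(a₁, a₂,…,a_k) = φ(p a₁, a₂,…,a_k) and φ(a₁,…,a_i p, a_{i+1},…,a_k) = φ(a₁,…,a_i, p a_{i+1},…,a_k) for all a₁,…,a_k ∈ M and 1 ≤ i ≤ k−1. Then for all a₁,…,a_k ∈ M, p φ(a₁,…,a_k) − p φ(a₁p, a₂p,…,a_kp) = Σ over nonempty subsets σ of {1,…,k} of (−1)^{|σ|+1} p φ_{σ,p}(a₁,…,a_k). -/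
set_option maxHeartbeats 1000000
set_option synthInstance.maxHeartbeats 400000

open scoped ComplexOrder
open Filter Topology

noncomputable section

namespace Paper

variable {H : Type*} [NormedAddCommGroup H] [InnerProductSpace ℂ H] [CompleteSpace H]

/-!
Write `cᵢ = p aᵢ - aᵢ p`. Expanding `φ` multilinearly gives `φ(a - c) = Σ_σ (-1)^|σ| φ_{σ,p}(a)`,
so the right-hand side equals `p φ(a) - p φ(a - c)`. It remains to see that
`p φ(a - c) = p φ(ap)`. Both tuples `t` satisfy `p tᵢ = p aᵢ p`; moving `p` from the left of
`φ` through the arguments from left to right, using that `p tᵢ p = p tᵢ`, turns `p φ(t)` into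
`φ(p t₁, …, p t_k)`, which is the same for both tuples.
-/

theorem _root_.MultilinearMap.map_sub_univ {R ι M₂ : Type*} {M₁ : ι → Type*} [CommRing R]
    [∀ i, AddCommGroup (M₁ i)] [AddCommGroup M₂] [∀ i, Module R (M₁ i)] [Module R M₂]
    [DecidableEq ι] [Fintype ι] (f : MultilinearMap R M₁ M₂) (m m' : ∀ i, M₁ i) :
    f (m - m') = ∑ s : Finset ι, (-1 : R) ^ s.card • f (s.piecewise m' m) := by
  rw [sub_eq_neg_add, f.map_add_univ]
  refine Finset.sum_congr rfl fun s _ => ?_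
  have hneg : s.piecewise (-m') m
      = s.piecewise (fun i => (-1 : R) • s.piecewise m' m i) (s.piecewise m' m) := by
    ext i
    by_cases hi : i ∈ s <;> simp [hi]
  rw [hneg, f.map_piecewise_smul, Finset.prod_const]

theorem _root_.MultilinearMap.map_sub_map_sub_univ {R ι M₂ : Type*} {M₁ : ι → Type*}
    [CommRing R] [∀ i, AddCommGroup (M₁ i)] [AddCommGroup M₂] [∀ i, Module R (M₁ i)]
    [Module R M₂] [DecidableEq ι] [Fintype ι] (f : MultilinearMap R M₁ M₂) (m m' : ∀ i, M₁ i) :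
    f m - f (m - m')
      = ∑ s ∈ Finset.univ.erase (∅ : Finset ι), (-1 : R) ^ (s.card + 1) • f (s.piecewise m' m) := by
  rw [f.map_sub_univ, ← Finset.add_sum_erase _ _ (Finset.mem_univ ∅)]
  simp only [Finset.piecewise_empty, Finset.card_empty, pow_zero, one_smul, pow_succ,
    mul_neg_one, neg_smul, Finset.sum_neg_distrib]
  abel

theorem mul_map_eq_map_mul {R : Type*} [Monoid R] {S : Set R} {p : R} {n : ℕ}
    {φ : (Fin (n + 1) → R) → R}
    (hmod1 : ∀ a : Fin (n + 1) → R, (∀ i, a i ∈ S) →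
      p * φ a = φ (Function.update a 0 (p * a 0)))
    (hmod2 : ∀ a : Fin (n + 1) → R, (∀ i, a i ∈ S) → ∀ i : Fin n,
      φ (Function.update a i.castSucc (a i.castSucc * p))
        = φ (Function.update a i.succ (p * a i.succ)))
    {t : Fin (n + 1) → R} (ht : ∀ i, t i ∈ S) (hpt : ∀ i, p * t i ∈ S)
    (hfix : ∀ i, p * t i * p = p * t i) :
    p * φ t = φ (fun i => p * t i) := by
  have hsweep : ∀ j ≤ n, p * φ t = φ (fun i => if (i : ℕ) ≤ j then p * t i else t i) := by
    intro j hj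
    induction j with
    | zero =>
      rw [hmod1 t ht]
      congr 1
      ext i
      by_cases hi : i = 0 <;> simp [hi]
    | succ j ih =>
      set b : Fin (n + 1) → R := fun i => if (i : ℕ) ≤ j then p * t i else t i
      have hbS : ∀ i, b i ∈ S := fun i => by
        by_cases hi : (i : ℕ) ≤ j <;> simp [b, hi, ht, hpt]
      set i₀ : Fin n := ⟨j, by omega⟩
      -- `b j = p tⱼ` is fixed by right multiplication by `p`
      have hleft : Function.update b i₀.castSucc (b i₀.castSucc * p) = b :=
        Function.update_eq_self_iff.mpr (by simp [b, i₀, hfix])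
      rw [ih (by omega), ← congrArg φ hleft, hmod2 b hbS i₀]
      congr 1
      ext i
      by_cases hi : (i : ℕ) = j + 1
      · obtain rfl : i = i₀.succ := Fin.ext hi
        simp [b, i₀]
      · have hne : i ≠ i₀.succ := fun h => hi (by simp [h, i₀])
        simp only [Function.update_of_ne hne, b]
        by_cases hij : (i : ℕ) ≤ j
        · simp [hij, Nat.le_succ_of_le hij]
        · simp [hij, show ¬ (i : ℕ) ≤ j + 1 by omega]
  rw [hsweep n le_rfl]
  congr 1
  ext i
  simp [Nat.le_of_lt_succ i.isLt]

/-- first half of Lemma 5.1 of the paper, i.e. Lemma 6.1 of [EFAR2].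
For `k = k'+2 ≥ 2` and a `k`-linear map `φ` compatible with the projection `p` as in
(5.1.1)–(5.1.2), `p φ(a₁,…,a_k) − p φ(a₁p,…,a_kp)
  = Σ_{∅ ≠ σ ⊆ {1,…,k}} (−1)^{|σ|+1} p φ_{σ,p}(a₁,…,a_k)`. -/
theorem statement12
    (M : VonNeumannAlgebra H) (p : H →L[ℂ] H) (hpM : p ∈ M) (hp : IsProjection p)
    (k : ℕ)
    (φ : MultilinearMap ℂ (fun _ : Fin (k + 2) => H →L[ℂ] H) (H →L[ℂ] H))
    (hmod1 : ∀ a : Fin (k + 2) → H →L[ℂ] H, (∀ i, a i ∈ M) →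
      p * φ a = φ (Function.update a 0 (p * a 0)))
    (hmod2 : ∀ a : Fin (k + 2) → H →L[ℂ] H, (∀ i, a i ∈ M) → ∀ i : Fin (k + 1),
      φ (Function.update a i.castSucc (a i.castSucc * p))
        = φ (Function.update a i.succ (p * a i.succ)))
    (a : Fin (k + 2) → H →L[ℂ] H) (ha : ∀ i, a i ∈ M) :
    p * φ a - p * φ (fun i => a i * p)
      = ∑ σ ∈ Finset.univ.erase (∅ : Finset (Fin (k + 2))),
          (-1 : ℂ) ^ (σ.card + 1) • (p * phiSigma ⇑φ p σ a) := by
  set c : Fin (k + 2) → H →L[ℂ] H := fun i => p * a i - a i * p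
  have hapM : ∀ i, a i * p ∈ M := fun i => M.mul_mem (ha i) hpM
  have hsubM : ∀ i, (a - c) i ∈ M := fun i =>
    M.sub_mem (ha i) (M.sub_mem (M.mul_mem hpM (ha i)) (hapM i))
  have hfix : ∀ i, p * (a i * p) * p = p * (a i * p) := fun i => by
    simp only [mul_assoc, hp.2]
  have hcorner : ∀ i, p * (a - c) i = p * (a i * p) := fun i => by
    simp only [Pi.sub_apply, c, mul_sub, ← mul_assoc, hp.2]
    abel
  have hsame : p * φ (a - c) = p * φ (fun i => a i * p) := by
    rw [mul_map_eq_map_mul (t := a - c) hmod1 hmod2 hsubM (fun i => M.mul_mem hpM (hsubM i))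
        (fun i => by rw [hcorner, hfix]),
      mul_map_eq_map_mul hmod1 hmod2 hapM (fun i => M.mul_mem hpM (hapM i)) hfix]
    simp only [hcorner]
  rw [← hsame, ← mul_sub, φ.map_sub_map_sub_univ, Finset.mul_sum]
  refine Finset.sum_congr rfl fun σ _ => ?_
  rw [mul_smul_comm]
  rfl

end Paper
end
end

section
/- Let H be a complex Hilbert space, M a von Neumann algebra on H, p ∈ M a projection, and k ≥ 2 an integer. Let φ : M^k → B(H) be a k-linear map satisfying p φ(a₁, a₂,…,a_k) = φ(p a₁, a₂,…,a_k) and φ(a₁,…,a_i p, a_{i+1},…,a_k) = φ(a₁,…,a_i, p a_{i+1},…,a_k) for all a₁,…,a_k ∈ M and 1 ≤ i ≤ k−1. Then for every nonempty subset σ of {1,…,k} with least element l(σ) and all a₁,…,a_k ∈ M, p φ_{σ,p}(a₁,…,a_k) = Σ_{i=1}^{l(σ)} φ_{σ,p,i}(a₁,…,a_k). -/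
set_option maxHeartbeats 1000000
set_option synthInstance.maxHeartbeats 400000

open scoped ComplexOrder
open Filter Topology

noncomputable section

namespace Paper

variable {H : Type*} [NormedAddCommGroup H] [InnerProductSpace ℂ H] [CompleteSpace H]

/-! For `i < l(σ)` the `i`-th argument `bᵢ` of `φ_{σ,p}` is `aᵢ` itself. Starting from
`p φ(b) = φ(p b₁, b₂, …)`, split `p bᵢ = [p, bᵢ] + bᵢ p` and move the `p` of `bᵢ p` onto the
next argument; after `l(σ)` steps this telescopes into `Σ_{i<l(σ)} φ_{σ,p,i} + φ_{σ,p,l(σ)}`. -/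

theorem _root_.MultilinearMap.map_update_mul_left_eq_sum_commutator {R A N : Type*}
    [CommSemiring R] [Ring A] [Module R A] [AddCommMonoid N] [Module R N] {n : ℕ}
    (φ : MultilinearMap R (fun _ : Fin (n + 1) => A) N) (p : A) (b : Fin (n + 1) → A)
    (hshift : ∀ i : Fin n, φ (Function.update b i.castSucc (b i.castSucc * p))
      = φ (Function.update b i.succ (p * b i.succ)))
    (m : Fin (n + 1)) :
    φ (Function.update b 0 (p * b 0))
      = ∑ i ∈ Finset.Iio m, φ (Function.update b i (p * b i - b i * p))
        + φ (Function.update b m (p * b m)) := by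
  induction m using Fin.induction with
  | zero => simp [← bot_eq_zero]
  | succ i ih =>
    have hIio : Finset.Iio i.succ = insert i.castSucc (Finset.Iio i.castSucc) := by
      rw [Finset.Iio_insert, ← Fin.orderSucc_castSucc,
        Finset.Iio_succ_eq_Iic_of_not_isMax (Fin.castSucc_lt_last i).not_isMax]
    rw [ih, hIio, Finset.sum_insert Finset.notMem_Iio_self, ← hshift i,
      add_comm (φ (Function.update b i.castSucc _)), add_assoc,
      ← φ.map_update_add, sub_add_cancel]

def sigmaCommutators {A : Type*} [Ring A] {k : ℕ} (p : A) (σ : Finset (Fin k)) (a : Fin k → A) :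
    Fin k → A :=
  fun i => if i ∈ σ then p * a i - a i * p else a i

theorem sigmaCommutators_mem {S A : Type*} [Ring A] [SetLike S A] [SubringClass S A]
    {s : S} {k : ℕ} {p : A} (hp : p ∈ s) (σ : Finset (Fin k)) {a : Fin k → A}
    (ha : ∀ i, a i ∈ s) (i : Fin k) : sigmaCommutators p σ a i ∈ s := by
  unfold sigmaCommutators
  split_ifs
  · exact sub_mem (mul_mem hp (ha i)) (mul_mem (ha i) hp)
  · exact ha i

section

variable {E : Type*} [NormedAddCommGroup E] [InnerProductSpace ℂ E]

theorem phiSigma_eq {k : ℕ} (φ : (Fin k → E →L[ℂ] E) → E →L[ℂ] E) (p : E →L[ℂ] E)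
    (σ : Finset (Fin k)) (a : Fin k → E →L[ℂ] E) :
    phiSigma φ p σ a = φ (sigmaCommutators p σ a) :=
  rfl

theorem phiSigmaI_of_lt {k : ℕ} (φ : (Fin k → E →L[ℂ] E) → E →L[ℂ] E) (p : E →L[ℂ] E)
    {σ : Finset (Fin k)} (hσ : σ.Nonempty) {i : Fin k} (hi : i < σ.min' hσ)
    (a : Fin k → E →L[ℂ] E) :
    phiSigmaI φ p σ hσ i a
      = φ (Function.update (sigmaCommutators p σ a) i
          (p * sigmaCommutators p σ a i - sigmaCommutators p σ a i * p)) := by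
  have hiσ : i ∉ σ := fun h => (σ.min'_le i h).not_gt hi
  unfold phiSigmaI
  congr 1
  funext j
  by_cases hj : j = i
  · subst hj
    simp [sigmaCommutators, hi.ne, hiσ]
  · simp [sigmaCommutators, hj]

theorem phiSigmaI_min' {k : ℕ} (φ : (Fin k → E →L[ℂ] E) → E →L[ℂ] E) (p : E →L[ℂ] E)
    {σ : Finset (Fin k)} (hσ : σ.Nonempty) (a : Fin k → E →L[ℂ] E) :
    phiSigmaI φ p σ hσ (σ.min' hσ) a
      = φ (Function.update (sigmaCommutators p σ a) (σ.min' hσ)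
          (p * sigmaCommutators p σ a (σ.min' hσ))) := by
  unfold phiSigmaI
  congr 1
  funext j
  by_cases hj : j = σ.min' hσ
  · subst hj
    simp [sigmaCommutators, σ.min'_mem hσ]
  · simp [sigmaCommutators, hj]

end

theorem statement13_general
    (M : VonNeumannAlgebra H) (p : H →L[ℂ] H) (hpM : p ∈ M)
    (k : ℕ)
    (φ : MultilinearMap ℂ (fun _ : Fin (k + 2) => H →L[ℂ] H) (H →L[ℂ] H))
    (hmod1 : ∀ a : Fin (k + 2) → H →L[ℂ] H, (∀ i, a i ∈ M) →
      p * φ a = φ (Function.update a 0 (p * a 0)))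
    (hmod2 : ∀ a : Fin (k + 2) → H →L[ℂ] H, (∀ i, a i ∈ M) → ∀ i : Fin (k + 1),
      φ (Function.update a i.castSucc (a i.castSucc * p))
        = φ (Function.update a i.succ (p * a i.succ)))
    (a : Fin (k + 2) → H →L[ℂ] H) (ha : ∀ i, a i ∈ M)
    (σ : Finset (Fin (k + 2))) (hσ : σ.Nonempty) :
    p * phiSigma ⇑φ p σ a
      = ∑ i ∈ Finset.univ.filter (fun i : Fin (k + 2) => i ≤ σ.min' hσ),
          phiSigmaI ⇑φ p σ hσ i a := by
  have hbM := sigmaCommutators_mem hpM σ ha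
  rw [phiSigma_eq, hmod1 _ hbM,
    φ.map_update_mul_left_eq_sum_commutator p _ (hmod2 _ hbM) (σ.min' hσ),
    Finset.filter_ge_eq_Iic, ← Finset.Iio_insert, Finset.sum_insert Finset.notMem_Iio_self,
    phiSigmaI_min', add_comm]
  congr 1
  exact Finset.sum_congr rfl fun i hi => (phiSigmaI_of_lt φ p hσ (Finset.mem_Iio.mp hi) a).symm

/-- second half of Lemma 5.1 of the paper, i.e. Lemma 6.1 of [EFAR2].
For every nonempty `σ ⊆ {1,…,k}` with least element `l(σ)`,
`p φ_{σ,p}(a₁,…,a_k) = Σ_{i=1}^{l(σ)} φ_{σ,p,i}(a₁,…,a_k)` (here `k = k'+2 ≥ 2`). -/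
theorem statement13
    (M : VonNeumannAlgebra H) (p : H →L[ℂ] H) (hpM : p ∈ M) (hp : IsProjection p)
    (k : ℕ)
    (φ : MultilinearMap ℂ (fun _ : Fin (k + 2) => H →L[ℂ] H) (H →L[ℂ] H))
    (hmod1 : ∀ a : Fin (k + 2) → H →L[ℂ] H, (∀ i, a i ∈ M) →
      p * φ a = φ (Function.update a 0 (p * a 0)))
    (hmod2 : ∀ a : Fin (k + 2) → H →L[ℂ] H, (∀ i, a i ∈ M) → ∀ i : Fin (k + 1),
      φ (Function.update a i.castSucc (a i.castSucc * p))
        = φ (Function.update a i.succ (p * a i.succ)))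
    (a : Fin (k + 2) → H →L[ℂ] H) (ha : ∀ i, a i ∈ M)
    (σ : Finset (Fin (k + 2))) (hσ : σ.Nonempty) :
    p * phiSigma ⇑φ p σ a
      = ∑ i ∈ Finset.univ.filter (fun i : Fin (k + 2) => i ≤ σ.min' hσ),
          phiSigmaI ⇑φ p σ hσ i a :=
  statement13_general M p hpM k φ hmod1 hmod2 a ha σ hσ

end Paper
end
end
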